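/- There exists an absolute constant C > 0 such that for all R > 0 and angles θ₁, θ₂ with 1/R < |θ₁ - θ₂| (distance on the circle), the number of lattice points λ ∈ ℤ² lying in the annulus R - 1/√2 < ‖λ‖ < R + 1/√2 whose polar angle lies in [θ₁, θ₂] is at most C·|θ₁ - θ₂|·R. -/

import Mathlib

open Real

/-- A lattice point viewed as a complex number. -/
noncomputable def latC (p : ℤ × ℤ) : ℂ := (p.1 : ℝ) + (p.2 : ℝ) * Complex.I

/-- Lattice points in the width-`√2` annulus around radius `R` whose polar angle
lies in `[θ₁, θ₂]`. -/
noncomputable def annulusSector (R θ₁ θ₂ : ℝ) : Set (ℤ × ℤ) :=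
  {p | R - 1/Real.sqrt 2 < ‖latC p‖ ∧ ‖latC p‖ < R + 1/Real.sqrt 2 ∧
    ∃ θ ∈ Set.Icc θ₁ θ₂, latC p = (‖latC p‖ : ℂ) * Complex.exp (θ * Complex.I)}

/-- Counting lattice points in a rotated box. -/
lemma count_box (φ A B a b : ℝ) (ha : 0 ≤ a) (hb : 0 ≤ b) (S : Set (ℤ × ℤ))
    (hS : ∀ p ∈ S, ((p.1 : ℝ) * Real.cos φ + (p.2 : ℝ) * Real.sin φ) ∈ Set.Icc A (A + a) ∧
      ((p.2 : ℝ) * Real.cos φ - (p.1 : ℝ) * Real.sin φ) ∈ Set.Icc B (B + b)) :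
    S.Finite ∧ ((S.ncard : ℝ) ≤ (Real.sqrt 2 * a + 2) * (Real.sqrt 2 * b + 2)) := by
  have hs2 : (Real.sqrt 2) ^ 2 = 2 := Real.sq_sqrt (by norm_num)
  have hs0 : 0 ≤ Real.sqrt 2 := Real.sqrt_nonneg 2
  set s : ℝ := Real.sqrt 2
  have hmaps : ∀ p ∈ S,
      (⌊s * ((p.1 : ℝ) * Real.cos φ + (p.2 : ℝ) * Real.sin φ)⌋,
       ⌊s * ((p.2 : ℝ) * Real.cos φ - (p.1 : ℝ) * Real.sin φ)⌋) ∈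
      (Finset.Icc ⌊s * A⌋ ⌊s * (A + a)⌋ ×ˢ Finset.Icc ⌊s * B⌋ ⌊s * (B + b)⌋) := by
    intro p hp
    obtain ⟨h1, h2⟩ := hS p hp
    simp only [Finset.mem_product, Finset.mem_Icc]
    refine ⟨⟨Int.floor_le_floor ?_, Int.floor_le_floor ?_⟩,
      ⟨Int.floor_le_floor ?_, Int.floor_le_floor ?_⟩⟩
    · exact mul_le_mul_of_nonneg_left h1.1 hs0
    · exact mul_le_mul_of_nonneg_left h1.2 hs0
    · exact mul_le_mul_of_nonneg_left h2.1 hs0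
    · exact mul_le_mul_of_nonneg_left h2.2 hs0
  have hinj : Set.InjOn (fun p : ℤ × ℤ =>
      (⌊s * ((p.1 : ℝ) * Real.cos φ + (p.2 : ℝ) * Real.sin φ)⌋,
       ⌊s * ((p.2 : ℝ) * Real.cos φ - (p.1 : ℝ) * Real.sin φ)⌋)) S := by
    intro p hp q hq hpq
    by_contra hne
    simp only [Prod.mk.injEq] at hpq
    have h1 := Int.abs_sub_lt_one_of_floor_eq_floor hpq.1
    have h2 := Int.abs_sub_lt_one_of_floor_eq_floor hpq.2
    rw [abs_lt] at h1 h2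
    have hge : (1 : ℝ) ≤ ((p.1 : ℝ) - q.1) ^ 2 + ((p.2 : ℝ) - q.2) ^ 2 := by
      have hor : p.1 ≠ q.1 ∨ p.2 ≠ q.2 := by
        by_contra hc
        push_neg at hc
        exact hne (Prod.ext hc.1 hc.2)
      rcases hor with h | h
      · have h' : (1 : ℤ) ≤ |p.1 - q.1| := Int.one_le_abs (sub_ne_zero.mpr h)
        have h'' : (1 : ℝ) ≤ |((p.1 - q.1 : ℤ) : ℝ)| := by
          rw [← Int.cast_abs]; exact_mod_cast h'
        push_cast at h''
        nlinarith [sq_nonneg ((p.2:ℝ) - q.2), sq_abs ((p.1:ℝ) - q.1),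
          sq_nonneg (|(p.1:ℝ) - q.1| - 1)]
      · have h' : (1 : ℤ) ≤ |p.2 - q.2| := Int.one_le_abs (sub_ne_zero.mpr h)
        have h'' : (1 : ℝ) ≤ |((p.2 - q.2 : ℤ) : ℝ)| := by
          rw [← Int.cast_abs]; exact_mod_cast h'
        push_cast at h''
        nlinarith [sq_nonneg ((p.1:ℝ) - q.1), sq_abs ((p.2:ℝ) - q.2),
          sq_nonneg (|(p.2:ℝ) - q.2| - 1)]
    have hX : (s * ((p.1:ℝ) * Real.cos φ + (p.2:ℝ) * Real.sin φ)
        - s * ((q.1:ℝ) * Real.cos φ + (q.2:ℝ) * Real.sin φ)) ^ 2 < 1 := by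
      nlinarith [h1.1, h1.2]
    have hY : (s * ((p.2:ℝ) * Real.cos φ - (p.1:ℝ) * Real.sin φ)
        - s * ((q.2:ℝ) * Real.cos φ - (q.1:ℝ) * Real.sin φ)) ^ 2 < 1 := by
      nlinarith [h2.1, h2.2]
    have key : (s * ((p.1:ℝ) * Real.cos φ + (p.2:ℝ) * Real.sin φ)
        - s * ((q.1:ℝ) * Real.cos φ + (q.2:ℝ) * Real.sin φ)) ^ 2
        + (s * ((p.2:ℝ) * Real.cos φ - (p.1:ℝ) * Real.sin φ)
        - s * ((q.2:ℝ) * Real.cos φ - (q.1:ℝ) * Real.sin φ)) ^ 2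
        = 2 * (((p.1:ℝ) - q.1) ^ 2 + ((p.2:ℝ) - q.2) ^ 2) := by
      have hsc := Real.sin_sq_add_cos_sq φ
      linear_combination ((((p.1:ℝ) - q.1) ^ 2 + ((p.2:ℝ) - q.2) ^ 2)
          * (Real.sin φ ^ 2 + Real.cos φ ^ 2)) * hs2
        + (2 * (((p.1:ℝ) - q.1) ^ 2 + ((p.2:ℝ) - q.2) ^ 2)) * hsc
    linarith [hX, hY, key, hge]
  have hfsub : (fun p : ℤ × ℤ =>
      (⌊s * ((p.1 : ℝ) * Real.cos φ + (p.2 : ℝ) * Real.sin φ)⌋,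
       ⌊s * ((p.2 : ℝ) * Real.cos φ - (p.1 : ℝ) * Real.sin φ)⌋)) '' S ⊆
      ↑(Finset.Icc ⌊s * A⌋ ⌊s * (A + a)⌋ ×ˢ Finset.Icc ⌊s * B⌋ ⌊s * (B + b)⌋) := by
    rintro _ ⟨p, hp, rfl⟩; exact hmaps p hp
  have hfin : S.Finite :=
    Set.Finite.of_finite_image
      ((Finset.Icc ⌊s * A⌋ ⌊s * (A + a)⌋ ×ˢ Finset.Icc ⌊s * B⌋ ⌊s * (B + b)⌋).finite_toSet.subset
        hfsub) hinj
  refine ⟨hfin, ?_⟩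
  have hcard : S.ncard ≤ (Finset.Icc ⌊s * A⌋ ⌊s * (A + a)⌋ ×ˢ
      Finset.Icc ⌊s * B⌋ ⌊s * (B + b)⌋).card := by
    rw [← Set.ncard_coe_finset, ← Set.ncard_image_of_injOn hinj]
    exact Set.ncard_le_ncard hfsub (Finset.finite_toSet _)
  have hTcard : ((Finset.Icc ⌊s * A⌋ ⌊s * (A + a)⌋ ×ˢ
      Finset.Icc ⌊s * B⌋ ⌊s * (B + b)⌋).card : ℝ) ≤ (s * a + 2) * (s * b + 2) := by
    rw [Finset.card_product, Int.card_Icc, Int.card_Icc]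
    have e1 : (0:ℤ) ≤ ⌊s * (A + a)⌋ + 1 - ⌊s * A⌋ := by
      have := Int.floor_le_floor (show s * A ≤ s * (A+a) by nlinarith); omega
    have e2 : (0:ℤ) ≤ ⌊s * (B + b)⌋ + 1 - ⌊s * B⌋ := by
      have := Int.floor_le_floor (show s * B ≤ s * (B+b) by nlinarith); omega
    have c1 : (((⌊s * (A + a)⌋ + 1 - ⌊s * A⌋).toNat : ℕ) : ℝ)
        = (⌊s * (A + a)⌋ : ℝ) + 1 - ⌊s * A⌋ := by
      exact_mod_cast congrArg (Int.cast : ℤ → ℝ) (Int.toNat_of_nonneg e1)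
    have c2 : (((⌊s * (B + b)⌋ + 1 - ⌊s * B⌋).toNat : ℕ) : ℝ)
        = (⌊s * (B + b)⌋ : ℝ) + 1 - ⌊s * B⌋ := by
      exact_mod_cast congrArg (Int.cast : ℤ → ℝ) (Int.toNat_of_nonneg e2)
    push_cast
    rw [c1, c2]
    have f1a := Int.floor_le (s * (A + a))
    have f1b := Int.lt_floor_add_one (s * A)
    have f2a := Int.floor_le (s * (B + b))
    have f2b := Int.lt_floor_add_one (s * B)
    have g2 : (0:ℝ) ≤ (⌊s * (B + b)⌋ : ℝ) + 1 - ⌊s * B⌋ := by exact_mod_cast e2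
    have B1 : (⌊s * (A + a)⌋ : ℝ) + 1 - ⌊s * A⌋ ≤ s * a + 2 := by nlinarith
    have B2 : (⌊s * (B + b)⌋ : ℝ) + 1 - ⌊s * B⌋ ≤ s * b + 2 := by nlinarith
    exact mul_le_mul B1 B2 g2 (by positivity)
  calc (S.ncard : ℝ) ≤ _ := by exact_mod_cast hcard
    _ ≤ (s * a + 2) * (s * b + 2) := hTcard
lemma sector_sub_box {R α β : ℝ} (hR : 1 ≤ R) (h0 : α ≤ β) (h1 : β - α ≤ 1) :
    ∀ p ∈ annulusSector R α β,
      ((p.1 : ℝ) * Real.cos α + (p.2 : ℝ) * Real.sin α) ∈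
        Set.Icc ((R - 1/Real.sqrt 2) * Real.cos (β - α))
          ((R - 1/Real.sqrt 2) * Real.cos (β - α) +
            ((R + 1/Real.sqrt 2) - (R - 1/Real.sqrt 2) * Real.cos (β - α))) ∧
      ((p.2 : ℝ) * Real.cos α - (p.1 : ℝ) * Real.sin α) ∈
        Set.Icc 0 (0 + (R + 1/Real.sqrt 2) * (β - α)) := by
  intro p hp
  obtain ⟨hlo, hhi, θ, hθ, heq⟩ := hp
  set r : ℝ := ‖latC p‖ with hr
  have hr0 : 0 ≤ r := norm_nonneg _
  have hm : (p.1 : ℝ) = r * Real.cos θ := by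
    have := congrArg Complex.re heq
    simpa [latC, Complex.exp_ofReal_mul_I_re, Complex.exp_ofReal_mul_I_im] using this
  have hn : (p.2 : ℝ) = r * Real.sin θ := by
    have := congrArg Complex.im heq
    simpa [latC, Complex.exp_ofReal_mul_I_re, Complex.exp_ofReal_mul_I_im] using this
  have hu : (p.1 : ℝ) * Real.cos α + (p.2 : ℝ) * Real.sin α = r * Real.cos (θ - α) := by
    rw [hm, hn, Real.cos_sub]; ring
  have hv : (p.2 : ℝ) * Real.cos α - (p.1 : ℝ) * Real.sin α = r * Real.sin (θ - α) := by
    rw [hm, hn, Real.sin_sub]; ring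
  have ht0 : 0 ≤ θ - α := by linarith [hθ.1]
  have ht1 : θ - α ≤ β - α := by linarith [hθ.2]
  have htpi : θ - α ≤ π := by linarith [Real.pi_gt_three]
  have hbapi : β - α ≤ π := by linarith [Real.pi_gt_three]
  have hsqrt2 : (1:ℝ)/Real.sqrt 2 ≤ 1 := by
    rw [div_le_one (by positivity)]
    nlinarith [Real.sq_sqrt (by norm_num : (2:ℝ) ≥ 0), Real.sqrt_nonneg 2]
  have hRlo : 0 ≤ R - 1/Real.sqrt 2 := by linarith
  have hcosw0 : 0 ≤ Real.cos (β - α) := by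
    apply Real.cos_nonneg_of_mem_Icc
    constructor
    · linarith [Real.pi_gt_three]
    · linarith [Real.pi_gt_three]
  refine ⟨⟨?_, ?_⟩, ?_, ?_⟩
  · rw [hu]
    exact mul_le_mul hlo.le (Real.cos_le_cos_of_nonneg_of_le_pi ht0 hbapi ht1) hcosw0 hr0
  · rw [hu]
    have : r * Real.cos (θ - α) ≤ r * 1 := by
      apply mul_le_mul_of_nonneg_left (Real.cos_le_one _) hr0
    linarith
  · rw [hv]
    exact mul_nonneg hr0 (Real.sin_nonneg_of_nonneg_of_le_pi ht0 htpi)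
  · rw [hv]
    have h1' : Real.sin (θ - α) ≤ β - α := le_trans (Real.sin_le ht0) ht1
    have h2' : 0 ≤ Real.sin (θ - α) := Real.sin_nonneg_of_nonneg_of_le_pi ht0 htpi
    have := mul_le_mul hhi.le h1' h2' (by linarith : (0:ℝ) ≤ R + 1/Real.sqrt 2)
    linarith

lemma sector_count {R : ℝ} (α w : ℝ) (hR : 1 ≤ R) (hw0 : 0 ≤ w) (hw1 : w ≤ 1)
    (hRw2 : R * w ^ 2 ≤ 1) :
    (annulusSector R α (α + w)).Finite ∧
      ((annulusSector R α (α + w)).ncard : ℝ) ≤ 15 * R * w + 10 := by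
  have hs2 : (Real.sqrt 2) ^ 2 = 2 := Real.sq_sqrt (by norm_num)
  have hs0 : (0:ℝ) ≤ Real.sqrt 2 := Real.sqrt_nonneg 2
  have hs1 : (1:ℝ) ≤ Real.sqrt 2 := by nlinarith
  have hs32 : Real.sqrt 2 ≤ 3/2 := by nlinarith
  have hinv : (1:ℝ) / Real.sqrt 2 = Real.sqrt 2 / 2 := by
    rw [div_eq_div_iff (by positivity) (by norm_num)]; nlinarith
  have hwsub : α + w - α = w := by ring
  have hbox := sector_sub_box hR (by linarith : α ≤ α + w) (by linarith) (R := R)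
  rw [hwsub] at hbox
  have ha : (0:ℝ) ≤ (R + 1/Real.sqrt 2) - (R - 1/Real.sqrt 2) * Real.cos w := by
    have := Real.cos_le_one w
    have hRlo : (0:ℝ) ≤ R - 1/Real.sqrt 2 := by rw [hinv]; nlinarith
    nlinarith [Real.sqrt_nonneg 2, hinv]
  have hb : (0:ℝ) ≤ (R + 1/Real.sqrt 2) * w := by
    apply mul_nonneg _ hw0
    rw [hinv]; nlinarith
  obtain ⟨hfin, hcount⟩ := count_box α ((R - 1/Real.sqrt 2) * Real.cos w) 0
    ((R + 1/Real.sqrt 2) - (R - 1/Real.sqrt 2) * Real.cos w) ((R + 1/Real.sqrt 2) * w)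
    ha hb (annulusSector R α (α + w)) hbox
  refine ⟨hfin, hcount.trans ?_⟩
  rw [hinv] at *
  have hclb : 1 - w ^ 2 / 2 ≤ Real.cos w := Real.one_sub_sq_div_two_le_cos
  have hcub := Real.cos_le_one w
  have haup : (R + Real.sqrt 2/2) - (R - Real.sqrt 2/2) * Real.cos w ≤ 2 := by nlinarith
  have F1 : Real.sqrt 2 * ((R + Real.sqrt 2/2) - (R - Real.sqrt 2/2) * Real.cos w) + 2 ≤ 5 := by
    nlinarith
  have F2 : Real.sqrt 2 * ((R + Real.sqrt 2/2) * w) + 2 ≤ 3 * R * w + 2 := by nlinarith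
  have F2p : (0:ℝ) ≤ Real.sqrt 2 * ((R + Real.sqrt 2/2) * w) + 2 := by nlinarith
  calc (Real.sqrt 2 * ((R + Real.sqrt 2/2) - (R - Real.sqrt 2/2) * Real.cos w) + 2)
        * (Real.sqrt 2 * ((R + Real.sqrt 2/2) * w) + 2)
      ≤ 5 * (3 * R * w + 2) := mul_le_mul F1 F2 F2p (by norm_num)
    _ = 15 * R * w + 10 := by ring

lemma ncard_biUnion_le' {γ : Type*} (s : ℕ → Set γ) (N : ℕ) :
    (⋃ i ∈ Finset.range N, s i).ncard ≤ ∑ i ∈ Finset.range N, (s i).ncard := by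
  induction N with
  | zero => simp
  | succ n ih =>
    rw [Finset.range_add_one, Finset.sum_insert (by simp), Finset.set_biUnion_insert]
    exact le_trans (Set.ncard_union_le _ _) (by omega)

lemma latC_re (p : ℤ × ℤ) : (latC p).re = (p.1 : ℝ) := by simp [latC]
lemma latC_im (p : ℤ × ℤ) : (latC p).im = (p.2 : ℝ) := by simp [latC]

set_option maxHeartbeats 2000000 in
theorem sector_count_upper :
    ∃ C : ℝ, 0 < C ∧ ∀ R : ℝ, 0 < R → ∀ θ₁ θ₂ : ℝ, θ₁ ≤ θ₂ → 1/R < θ₂ - θ₁ →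
      ((annulusSector R θ₁ θ₂).ncard : ℝ) ≤ C * (θ₂ - θ₁) * R := by
  refine ⟨50, by norm_num, ?_⟩
  intro R hR θ₁ θ₂ hle hgap
  have hδR : 1 < (θ₂ - θ₁) * R := by
    rw [div_lt_iff₀ hR] at hgap; linarith
  have hδ0 : 0 < θ₂ - θ₁ := by
    have : 0 < 1/R := by positivity
    linarith
  rcases le_or_gt R 1 with hR1 | hR1
  · -- small R : at most 25 lattice points
    have hsub : annulusSector R θ₁ θ₂ ⊆
        ↑(Finset.Icc (-2 : ℤ) 2 ×ˢ Finset.Icc (-2 : ℤ) 2) := by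
      intro p hp
      obtain ⟨_, hhi, _⟩ := hp
      have hs1 : (1:ℝ)/Real.sqrt 2 ≤ 1 := by
        rw [div_le_one (by positivity)]
        nlinarith [Real.sq_sqrt (by norm_num : (0:ℝ) ≤ 2), Real.sqrt_nonneg 2]
      have h1 : |(p.1 : ℝ)| ≤ ‖latC p‖ := by
        rw [← latC_re p]; exact Complex.abs_re_le_norm _
      have h2 : |(p.2 : ℝ)| ≤ ‖latC p‖ := by
        rw [← latC_im p]; exact Complex.abs_im_le_norm _
      have b1 : |(p.1 : ℝ)| ≤ 2 := by linarith
      have b2 : |(p.2 : ℝ)| ≤ 2 := by linarith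
      rw [abs_le] at b1 b2
      simp only [Finset.coe_product, Set.mem_prod, Finset.mem_coe, Finset.mem_Icc]
      have c1 : (-2:ℤ) ≤ p.1 := by exact_mod_cast b1.1
      have c2 : p.1 ≤ (2:ℤ) := by exact_mod_cast b1.2
      have c3 : (-2:ℤ) ≤ p.2 := by exact_mod_cast b2.1
      have c4 : p.2 ≤ (2:ℤ) := by exact_mod_cast b2.2
      exact ⟨⟨c1, c2⟩, c3, c4⟩
    have hcard : (annulusSector R θ₁ θ₂).ncard ≤ 25 := by
      have := Set.ncard_le_ncard hsub (Finset.finite_toSet _)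
      rwa [Set.ncard_coe_finset, show (Finset.Icc (-2 : ℤ) 2 ×ˢ Finset.Icc (-2 : ℤ) 2).card = 25
        from by rw [Finset.card_product, Int.card_Icc]; rfl] at this
    have : ((annulusSector R θ₁ θ₂).ncard : ℝ) ≤ 25 := by exact_mod_cast hcard
    nlinarith
  · -- main case R ≥ 1
    have hR1 := hR1.le
    set sR : ℝ := Real.sqrt R with hsR
    have hsR2 : sR ^ 2 = R := Real.sq_sqrt (by linarith)
    have hsR0 : 0 ≤ sR := Real.sqrt_nonneg R
    have hsR1 : 1 ≤ sR := by nlinarith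
    have hsRle : sR ≤ R := by nlinarith
    set δ : ℝ := θ₂ - θ₁ with hδ
    set N : ℕ := ⌈δ * sR⌉₊ with hN
    have hN0 : 0 < N := Nat.ceil_pos.mpr (by positivity)
    have hNge : δ * sR ≤ (N : ℝ) := Nat.le_ceil _
    have hNle : (N : ℝ) < δ * sR + 1 := Nat.ceil_lt_add_one (by positivity)
    set w : ℝ := δ / N with hw
    have hNR : (0:ℝ) < N := by exact_mod_cast hN0
    have hw0 : 0 < w := by positivity
    have hNw : (N : ℝ) * w = δ := by rw [hw]; field_simp
    have hwle : w ≤ 1 / sR := by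
      rw [hw, div_le_div_iff₀ hNR (by positivity)]
      nlinarith
    have hw1 : w ≤ 1 := by
      have : (1:ℝ)/sR ≤ 1 := by rw [div_le_one (by positivity)]; exact hsR1
      linarith
    have hRw2 : R * w ^ 2 ≤ 1 := by
      have hw2 : w ^ 2 ≤ (1/sR) ^ 2 := by nlinarith
      have : (1/sR) ^ 2 = 1 / R := by rw [div_pow, one_pow, hsR2]
      rw [this] at hw2
      have hRinv : R * (1/R) = 1 := by field_simp
      nlinarith [hw2, hR.le]
    clear_value sR δ N w
    have hcov : annulusSector R θ₁ θ₂ ⊆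
        ⋃ i ∈ Finset.range N, annulusSector R (θ₁ + i * w) ((θ₁ + i * w) + w) := by
      intro p hp
      obtain ⟨h1, h2, θ, hθ, heq⟩ := hp
      obtain ⟨i, hi⟩ : ∃ i : ℕ, i = min ⌊(θ - θ₁) / w⌋₊ (N - 1) := ⟨_, rfl⟩
      have hiN : i < N := by omega
      have hicast : (i : ℝ) ≤ ⌊(θ - θ₁) / w⌋₊ := by
        have : i ≤ ⌊(θ - θ₁) / w⌋₊ := by omega
        exact_mod_cast this
      have hfl : (⌊(θ - θ₁) / w⌋₊ : ℝ) ≤ (θ - θ₁) / w :=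
        Nat.floor_le (div_nonneg (by linarith [hθ.1]) hw0.le)
      have hlo : θ₁ + (i : ℝ) * w ≤ θ := by
        have : (i : ℝ) * w ≤ ((θ - θ₁) / w) * w :=
          mul_le_mul_of_nonneg_right (hicast.trans hfl) hw0.le
        rw [div_mul_cancel₀ _ hw0.ne'] at this
        linarith
      have hhi : θ ≤ (θ₁ + (i : ℝ) * w) + w := by
        rcases le_or_gt ⌊(θ - θ₁) / w⌋₊ (N - 1) with hc | hc
        · have hieq : i = ⌊(θ - θ₁) / w⌋₊ := by omega
          have := Nat.lt_floor_add_one ((θ - θ₁) / w)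
          rw [div_lt_iff₀ hw0] at this
          rw [hieq]
          push_cast
          nlinarith
        · have hieq : i = N - 1 := by omega
          have hNc : ((N - 1 : ℕ) : ℝ) = (N : ℝ) - 1 := by
            have : (1:ℕ) ≤ N := hN0
            push_cast [Nat.cast_sub this]
            ring
          rw [hieq, hNc]
          have hθ2 : θ ≤ θ₂ := hθ.2
          have : θ₂ = θ₁ + (N : ℝ) * w := by rw [hNw]; simp [hδ]
          rw [this] at hθ2
          have hring : ((N:ℝ) - 1) * w + w = (N:ℝ) * w := by ring
          linarith
      have hmem : p ∈ annulusSector R (θ₁ + (i : ℝ) * w) ((θ₁ + (i : ℝ) * w) + w) :=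
        ⟨h1, h2, θ, ⟨hlo, hhi⟩, heq⟩
      exact Set.mem_iUnion₂.mpr ⟨i, Finset.mem_range.mpr hiN, hmem⟩
    have hfini := fun i : ℕ => sector_count (θ₁ + (i : ℝ) * w) w hR1 hw0.le hw1 hRw2
    have hfinU : (⋃ i ∈ Finset.range N,
        annulusSector R (θ₁ + (i : ℝ) * w) ((θ₁ + (i : ℝ) * w) + w)).Finite :=
      Set.Finite.biUnion (Finset.range N).finite_toSet (fun i _ => (hfini i).1)
    have hcard1 : (annulusSector R θ₁ θ₂).ncard ≤
        (⋃ i ∈ Finset.range N,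
          annulusSector R (θ₁ + (i : ℝ) * w) ((θ₁ + (i : ℝ) * w) + w)).ncard :=
      Set.ncard_le_ncard hcov hfinU
    have hcard2 := ncard_biUnion_le'
      (fun i : ℕ => annulusSector R (θ₁ + (i : ℝ) * w) ((θ₁ + (i : ℝ) * w) + w)) N
    have hsum : ((annulusSector R θ₁ θ₂).ncard : ℝ) ≤
        ∑ i ∈ Finset.range N,
          ((annulusSector R (θ₁ + (i : ℝ) * w) ((θ₁ + (i : ℝ) * w) + w)).ncard : ℝ) := by
      push_cast
      exact_mod_cast le_trans hcard1 hcard2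
    have hsum2 : ∑ i ∈ Finset.range N,
        ((annulusSector R (θ₁ + (i : ℝ) * w) ((θ₁ + (i : ℝ) * w) + w)).ncard : ℝ) ≤
        (N : ℝ) * (15 * R * w + 10) := by
      calc _ ≤ ∑ _i ∈ Finset.range N, (15 * R * w + 10) :=
            Finset.sum_le_sum (fun i _ => (hfini i).2)
        _ = (N : ℝ) * (15 * R * w + 10) := by
            rw [Finset.sum_const, Finset.card_range, nsmul_eq_mul]
    have hNeq : (N : ℝ) * (15 * R * w + 10) = 15 * R * δ + 10 * N := by
      linear_combination (15 * R) * hNw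
    have hδsR : δ * sR ≤ δ * R := mul_le_mul_of_nonneg_left hsRle hδ0.le
    have hfinal : 15 * R * δ + 10 * (N:ℝ) ≤ 50 * δ * R := by
      nlinarith [hNle, hδsR, hδR, hδ0.le, hR.le]
    have hbig := hsum.trans hsum2
    linarith [hbig, hNeq, hfinal]
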